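/- arXiv:2406.18302 — 2 statements merged into one kernel-verified Lean document; each statement's English description precedes it below -/
import Mathlib

section
/- Let n be a positive integer and let π : ℂ^{n×n} → ℂ^n be the symmetrization map, π(M) = (σ_1(M), …, σ_n(M)). For every matrix B ∈ ℂ^{n×n}, the rank of the derivative π'(B) : ℂ^{n×n} → ℂ^n is at most the degree of the minimal polynomial of B. -/
open Matrix Polynomial

attribute [local instance] Matrix.normedAddCommGroup Matrix.normedSpace

/-- `matSigma n j M` = σ_j(M), the coefficients defined by
det(tI − M) = Σ_{j=0}^n (−1)^j σ_j(M) t^{n−j}, i.e. σ_j(M) = (−1)^j · coeff_{n−j}(charpoly M). -/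
noncomputable def matSigma (n j : ℕ) (M : Matrix (Fin n) (Fin n) ℂ) : ℂ :=
  (-1 : ℂ) ^ j * (Matrix.charpoly M).coeff (n - j)

/-- The symmetrization map π : ℂ^{n×n} → ℂ^n, π(M) = (σ_1(M), …, σ_n(M)).
(The `j`-th component, `j : Fin n` zero-based, is σ_{j+1}(M).) -/
noncomputable def symmPi (n : ℕ) (M : Matrix (Fin n) (Fin n) ℂ) : Fin n → ℂ :=
  fun j => matSigma n ((j : ℕ) + 1) M

/-- The determinant, as a continuous multilinear map in the rows. -/
noncomputable def detCM (n : ℕ) :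
    ContinuousMultilinearMap ℂ (fun _ : Fin n => (Fin n → ℂ)) ℂ :=
  MultilinearMap.mkContinuous
    (Matrix.detRowAlternating : (Fin n → ℂ) [⋀^Fin n]→ₗ[ℂ] ℂ).toMultilinearMap
    n.factorial (fun m => by
      have hu : ∀ (u : ℤˣ) (z : ℂ), ‖u • z‖ = ‖z‖ := by
        intro u z
        rcases Int.units_eq_one_or u with h | h <;> simp [h]
      have h0 : ((Matrix.detRowAlternating :
          (Fin n → ℂ) [⋀^Fin n]→ₗ[ℂ] ℂ).toMultilinearMap m : ℂ)
          = (Matrix.of fun i j => m i j).det := rfl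
      rw [h0, Matrix.det_apply]
      calc ‖∑ σ : Equiv.Perm (Fin n), Equiv.Perm.sign σ •
              ∏ i, (Matrix.of fun i j => m i j) (σ i) i‖
          ≤ ∑ σ : Equiv.Perm (Fin n), ‖Equiv.Perm.sign σ •
              ∏ i, (Matrix.of fun i j => m i j) (σ i) i‖ := norm_sum_le _ _
        _ ≤ ∑ _σ : Equiv.Perm (Fin n), ∏ i, ‖m i‖ := by
            refine Finset.sum_le_sum fun σ _ => ?_
            rw [hu, norm_prod]
            calc ∏ i, ‖(Matrix.of fun i j => m i j) (σ i) i‖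
                ≤ ∏ i, ‖m (σ i)‖ :=
                  Finset.prod_le_prod (fun i _ => norm_nonneg _)
                    (fun i _ => norm_le_pi_norm (m (σ i)) i)
              _ = ∏ i, ‖m i‖ := Equiv.prod_comp σ (fun i => ‖m i‖)
        _ = n.factorial * ∏ i, ‖m i‖ := by
            rw [Finset.sum_const, Finset.card_univ, Fintype.card_perm, nsmul_eq_mul]
            simp)

lemma detCM_apply {n : ℕ} (m : Fin n → Fin n → ℂ) :
    detCM n m = (Matrix.of fun i j => m i j).det := rfl

lemma eval_charpoly_eq {n : ℕ} (M : Matrix (Fin n) (Fin n) ℂ) (x : ℂ) :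
    (Matrix.charpoly M).eval x
      = Matrix.det (x • (1 : Matrix (Fin n) (Fin n) ℂ) - M) := by
  rw [Matrix.charpoly, ← Polynomial.coe_evalRingHom, RingHom.map_det]
  congr 1
  ext i j
  by_cases h : i = j <;>
    simp [h, Matrix.charmatrix_apply, Matrix.one_apply, Matrix.diagonal_apply,
      Matrix.sub_apply, Matrix.smul_apply]
lemma trace_aeval_mul_eq_zero {n : ℕ} (B H : Matrix (Fin n) (Fin n) ℂ)
    (hH : ∀ j : ℕ, j < (minpoly ℂ B).natDegree → Matrix.trace (B ^ j * H) = 0)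
    (p : ℂ[X]) : Matrix.trace (aeval B p * H) = 0 := by
  have hint : IsIntegral ℂ B := IsIntegral.of_finite ℂ B
  have hmono : (minpoly ℂ B).Monic := minpoly.monic hint
  have hlow : ∀ q : ℂ[X], q.natDegree < (minpoly ℂ B).natDegree →
      Matrix.trace (aeval B q * H) = 0 := by
    intro q hq
    rw [aeval_eq_sum_range, Finset.sum_mul, Matrix.trace_sum]
    refine Finset.sum_eq_zero fun i hi => ?_
    rw [smul_mul_assoc, Matrix.trace_smul]
    have hi0 : i < q.natDegree + 1 := Finset.mem_range.mp hi
    have hi' : i < (minpoly ℂ B).natDegree := by omega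
    rw [hH i hi', smul_zero]
  have hmod : aeval B (p %ₘ minpoly ℂ B) = aeval B p :=
    aeval_modByMonic_eq_self_of_root (minpoly.aeval ℂ B)
  rw [← hmod]
  rcases eq_or_ne (p %ₘ minpoly ℂ B) 0 with h0 | h0
  · rw [h0]; simp
  · exact hlow _ (Polynomial.natDegree_lt_natDegree h0
      (Polynomial.degree_modByMonic_lt p hmono))

lemma adjugate_eq_aeval {n : ℕ} (B : Matrix (Fin n) (Fin n) ℂ) (x : ℂ)
    (hdet : Matrix.det (x • (1 : Matrix (Fin n) (Fin n) ℂ) - B) ≠ 0) :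
    ∃ p : ℂ[X],
      Matrix.adjugate (x • (1 : Matrix (Fin n) (Fin n) ℂ) - B) = aeval B p := by
  set A : Matrix (Fin n) (Fin n) ℂ := x • 1 - B with hA
  have hc0 : (Matrix.charpoly A).coeff 0 ≠ 0 := by
    intro h
    apply hdet
    show A.det = 0
    rw [Matrix.det_eq_sign_charpoly_coeff, h, mul_zero]
  set c0 : ℂ := (Matrix.charpoly A).coeff 0 with hc0def
  set q : ℂ[X] := (Matrix.charpoly A).divX with hqdef
  have hch : aeval A (Matrix.charpoly A) = 0 := Matrix.aeval_self_charpoly A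
  have hsplit : q * X + C c0 = Matrix.charpoly A := Polynomial.divX_mul_X_add _
  have hmul : aeval A q * A + c0 • 1 = 0 := by
    have h := congrArg (aeval A) hsplit
    rw [map_add, _root_.map_mul, aeval_X, aeval_C, hch] at h
    rw [← h, Algebra.algebraMap_eq_smul_one]
  have hAq : A * aeval A q = (-c0) • 1 := by
    have hcomm : A * aeval A q = aeval A q * A := by
      have h1 : aeval A (X * q) = A * aeval A q := by rw [_root_.map_mul, aeval_X]
      have h2 : aeval A (q * X) = aeval A q * A := by rw [_root_.map_mul, aeval_X]
      rw [← h1, mul_comm X q, h2]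
    rw [hcomm, neg_smul, eq_neg_iff_add_eq_zero, hmul]
  set N : Matrix (Fin n) (Fin n) ℂ := (-c0)⁻¹ • aeval A q with hN
  have hAN : A * N = 1 := by
    rw [hN, Matrix.mul_smul, hAq, smul_smul,
      inv_mul_cancel₀ (neg_ne_zero.mpr hc0), one_smul]
  have hadjA : Matrix.adjugate A = A.det • N := by
    calc Matrix.adjugate A = Matrix.adjugate A * (A * N) := by rw [hAN, mul_one]
      _ = (Matrix.adjugate A * A) * N := by rw [mul_assoc]
      _ = (A.det • 1) * N := by rw [Matrix.adjugate_mul]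
      _ = A.det • N := by rw [smul_mul_assoc, one_mul]
  have hAB : aeval B (C x - X : ℂ[X]) = A := by
    rw [map_sub, aeval_C, aeval_X, Algebra.algebraMap_eq_smul_one]
  refine ⟨C (A.det * (-c0)⁻¹) * (q.comp (C x - X)), ?_⟩
  rw [_root_.map_mul, aeval_C, ← Algebra.smul_def, aeval_comp, hAB, hadjA, hN, smul_smul]
lemma sum_det_updateRow {n : ℕ} (A V : Matrix (Fin n) (Fin n) ℂ) :
    ∑ i, (A.updateRow i (V i)).det = Matrix.trace (Matrix.adjugate A * V) := by
  have hrow : ∀ i, (A.updateRow i (V i)).det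
      = ∑ j, V i j * Matrix.adjugate A j i := by
    intro i
    have hv : V i = ∑ j, V i j • (Pi.single j 1 : Fin n → ℂ) := by
      funext k
      simp [Pi.single_apply, Finset.sum_apply, mul_ite, mul_one, mul_zero]
    conv_lhs => rw [hv]
    have h1 : (A.updateRow i (∑ j, V i j • (Pi.single j 1 : Fin n → ℂ))).det
        = (Matrix.detRowAlternating :
            (Fin n → ℂ) [⋀^Fin n]→ₗ[ℂ] ℂ).toMultilinearMap
          (Function.update (fun k => A k) i (∑ j, V i j • (Pi.single j 1 : Fin n → ℂ))) := rfl
    rw [h1, MultilinearMap.map_update_sum]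
    refine Finset.sum_congr rfl fun j _ => ?_
    rw [MultilinearMap.map_update_smul, Matrix.adjugate_apply, smul_eq_mul]
    rfl
  simp_rw [hrow]
  have h2 : Matrix.trace (Matrix.adjugate A * V)
      = ∑ k, ∑ j, Matrix.adjugate A k j * V j k := by
    simp [Matrix.trace, Matrix.mul_apply, Matrix.diag]
  rw [h2, Finset.sum_comm]
  exact Finset.sum_congr rfl fun i _ => Finset.sum_congr rfl fun j _ => by
    rw [mul_comm]

lemma charpoly_coeff_interp {n : ℕ} (s : Finset ℂ) (hcard : s.card = n + 1)
    (M : Matrix (Fin n) (Fin n) ℂ) (m : ℕ) :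
    (Matrix.charpoly M).coeff m
      = ∑ x ∈ s, (Lagrange.basis s id x).coeff m
          * Matrix.det (x • (1 : Matrix (Fin n) (Fin n) ℂ) - M) := by
  have hdeg : (Matrix.charpoly M).degree < s.card := by
    have h1 : (Matrix.charpoly M).natDegree = n := by
      simpa using Matrix.charpoly_natDegree_eq_dim M
    refine lt_of_le_of_lt Polynomial.degree_le_natDegree ?_
    rw [h1, hcard]
    exact_mod_cast Nat.lt_succ_self n
  have hinj : Set.InjOn id (s : Set ℂ) := Set.injOn_id _
  have h2 := Lagrange.eq_interpolate hinj hdeg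
  conv_lhs => rw [h2]
  rw [Lagrange.interpolate_apply, Polynomial.finset_sum_coeff]
  refine Finset.sum_congr rfl fun x hx => ?_
  rw [Polynomial.coeff_C_mul, id_eq, eval_charpoly_eq, mul_comm]


/-- For every matrix B ∈ ℂ^{n×n}, the rank of the derivative π'(B) : ℂ^{n×n} → ℂ^n of the
symmetrization map at B is at most the degree of the minimal polynomial of B. -/
theorem rank_fderiv_symmPi_le_natDegree_minpoly
    (n : ℕ) (hn : 0 < n) (B : Matrix (Fin n) (Fin n) ℂ) :
    Module.finrank ℂ (LinearMap.range (fderiv ℂ (symmPi n) B).toLinearMap)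
      ≤ (minpoly ℂ B).natDegree := by
  classical
  set d := (minpoly ℂ B).natDegree with hd
  -- choose interpolation nodes avoiding the spectrum of B
  have hfin : Set.Finite {x : ℂ | (Matrix.charpoly B).IsRoot x} :=
    Polynomial.finite_setOf_isRoot (Matrix.charpoly_monic B).ne_zero
  have hinf : Set.Infinite {x : ℂ | (Matrix.charpoly B).IsRoot x}ᶜ :=
    hfin.infinite_compl
  obtain ⟨s, hsub, hcard⟩ := hinf.exists_subset_card_eq (n + 1)
  have hdetx : ∀ x ∈ s,
      Matrix.det (x • (1 : Matrix (Fin n) (Fin n) ℂ) - B) ≠ 0 := by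
    intro x hx
    have hmem := hsub hx
    rw [← eval_charpoly_eq]
    simpa [Polynomial.IsRoot] using hmem
  -- the derivative of the affine determinant maps
  set D : ℂ → (Matrix (Fin n) (Fin n) ℂ →L[ℂ] ℂ) := fun x =>
    ((detCM n).linearDeriv (x • (1 : Matrix (Fin n) (Fin n) ℂ) - B)).comp
      (0 - ContinuousLinearMap.id ℂ (Matrix (Fin n) (Fin n) ℂ)) with hD
  have hDf : ∀ x : ℂ, HasFDerivAt
      (fun M : Matrix (Fin n) (Fin n) ℂ =>
        Matrix.det (x • (1 : Matrix (Fin n) (Fin n) ℂ) - M)) (D x) B := by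
    intro x
    have h1 : HasFDerivAt
        (fun M : Matrix (Fin n) (Fin n) ℂ =>
          x • (1 : Matrix (Fin n) (Fin n) ℂ) - M)
        (0 - ContinuousLinearMap.id ℂ (Matrix (Fin n) (Fin n) ℂ)) B :=
      (hasFDerivAt_const _ _).sub (hasFDerivAt_id B)
    exact ((detCM n).hasFDerivAt
      (x • (1 : Matrix (Fin n) (Fin n) ℂ) - B)).comp B h1
  -- D x vanishes on matrices H whose trace pairings with powers of B vanish
  have hDzero : ∀ x ∈ s, ∀ H : Matrix (Fin n) (Fin n) ℂ,
      (∀ j : ℕ, j < d → Matrix.trace (B ^ j * H) = 0) → D x H = 0 := by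
    intro x hx H hH
    have h1 : D x H = (detCM n).linearDeriv
        (x • (1 : Matrix (Fin n) (Fin n) ℂ) - B) (-H) := by
      simp only [hD, ContinuousLinearMap.comp_apply, ContinuousLinearMap.sub_apply,
        ContinuousLinearMap.zero_apply, ContinuousLinearMap.id_apply, zero_sub,
        ContinuousLinearMap.neg_apply]
      exact congrArg ((detCM n).linearDeriv (x • (1 : Matrix (Fin n) (Fin n) ℂ) - B))
        (show (0 - ContinuousLinearMap.id ℂ (Matrix (Fin n) (Fin n) ℂ)) H = -H from by
          rw [ContinuousLinearMap.sub_apply, ContinuousLinearMap.zero_apply,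
            ContinuousLinearMap.id_apply, zero_sub])
    rw [h1]; erw [ContinuousMultilinearMap.linearDeriv_apply]
    have h2 : ∀ i : Fin n, (detCM n)
        (Function.update (x • (1 : Matrix (Fin n) (Fin n) ℂ) - B) i ((-H) i))
        = ((x • (1 : Matrix (Fin n) (Fin n) ℂ) - B).updateRow i ((-H) i)).det :=
      fun i => rfl
    calc (∑ i, (detCM n)
          (Function.update (x • (1 : Matrix (Fin n) (Fin n) ℂ) - B) i ((-H) i)))
        = ∑ i, ((x • (1 : Matrix (Fin n) (Fin n) ℂ) - B).updateRow i ((-H) i)).det :=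
          Finset.sum_congr rfl fun i _ => h2 i
      _ = Matrix.trace (Matrix.adjugate (x • (1 : Matrix (Fin n) (Fin n) ℂ) - B) * (-H)) :=
          sum_det_updateRow _ _
      _ = 0 := by
          obtain ⟨p, hp⟩ := adjugate_eq_aeval B x (hdetx x hx)
          rw [hp]
          exact trace_aeval_mul_eq_zero B (-H)
            (fun j hj => by rw [Matrix.mul_neg, Matrix.trace_neg, hH j hj, neg_zero]) p
  -- the representation of symmPi as finite sums of affine determinants
  set c : Fin n → ℂ → ℂ := fun j x =>
    (-1 : ℂ) ^ ((j : ℕ) + 1) * (Lagrange.basis s id x).coeff (n - ((j : ℕ) + 1)) with hc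
  have hrepr : symmPi n = fun M (j : Fin n) =>
      ∑ x ∈ s, c j x * Matrix.det (x • (1 : Matrix (Fin n) (Fin n) ℂ) - M) := by
    funext M j
    show matSigma n ((j : ℕ) + 1) M = _
    rw [matSigma, charpoly_coeff_interp s hcard M (n - ((j : ℕ) + 1)), Finset.mul_sum]
    exact Finset.sum_congr rfl fun x _ => by rw [hc]; ring
  have hL : HasFDerivAt (symmPi n)
      (ContinuousLinearMap.pi fun j : Fin n => ∑ x ∈ s, c j x • D x) B := by
    rw [hrepr]
    refine hasFDerivAt_pi.mpr fun j => ?_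
    exact HasFDerivAt.fun_sum fun x _ => (hDf x).const_mul (c j x)
  -- the comparison linear map T
  set T : Matrix (Fin n) (Fin n) ℂ →ₗ[ℂ] (Fin d → ℂ) :=
    LinearMap.pi fun j : Fin d =>
      (Matrix.traceLinearMap (Fin n) ℂ ℂ) ∘ₗ (LinearMap.mulLeft ℂ (B ^ (j : ℕ))) with hT
  have hker : LinearMap.ker T ≤ LinearMap.ker (fderiv ℂ (symmPi n) B).toLinearMap := by
    intro H hH
    rw [LinearMap.mem_ker] at hH ⊢
    have hHj : ∀ j : ℕ, j < d → Matrix.trace (B ^ j * H) = 0 := by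
      intro j hj
      have h3 := congrFun hH ⟨j, hj⟩
      simpa [hT] using h3
    show (fderiv ℂ (symmPi n) B) H = 0
    rw [hL.fderiv]
    funext j
    simp only [ContinuousLinearMap.pi_apply, ContinuousLinearMap.sum_apply,
      ContinuousLinearMap.smul_apply, Pi.zero_apply]
    exact Finset.sum_eq_zero fun x hx => by rw [hDzero x hx H hHj, smul_zero]
  -- dimension count
  have e1 := LinearMap.finrank_range_add_finrank_ker (fderiv ℂ (symmPi n) B).toLinearMap
  have e2 := LinearMap.finrank_range_add_finrank_ker T
  have e3 : Module.finrank ℂ (LinearMap.ker T)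
      ≤ Module.finrank ℂ (LinearMap.ker (fderiv ℂ (symmPi n) B).toLinearMap) :=
    Submodule.finrank_mono hker
  have e4 : Module.finrank ℂ (LinearMap.range T) ≤ d := by
    have h5 := Submodule.finrank_le (LinearMap.range T)
    simpa [Module.finrank_pi] using h5
  omega
end

section
/- Let n be a positive integer and let π : ℂ^{n×n} → ℂ^n be the symmetrization map, π(M) = (σ_1(M), …, σ_n(M)). For every matrix B ∈ ℂ^{n×n}, the rank of the derivative π'(B) : ℂ^{n×n} → ℂ^n is at least the degree of the minimal polynomial of B. -/
open Matrix Polynomial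

attribute [local instance] Matrix.normedAddCommGroup Matrix.normedSpace

variable {n : ℕ}

/-- trace pairing functional, as a linear map. -/
noncomputable def trLin (n : ℕ) (X : Matrix (Fin n) (Fin n) ℂ) :
    Matrix (Fin n) (Fin n) ℂ →ₗ[ℂ] ℂ where
  toFun H := Matrix.trace (X * H)
  map_add' H₁ H₂ := by simp [Matrix.mul_add]
  map_smul' c H := by simp [Matrix.mul_smul]

/-- trace pairing functional, as a continuous linear map. -/
noncomputable def trCLM (n : ℕ) (X : Matrix (Fin n) (Fin n) ℂ) :
    Matrix (Fin n) (Fin n) ℂ →L[ℂ] ℂ :=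
  LinearMap.toContinuousLinearMap (trLin n X)

@[simp] lemma trCLM_apply (X H : Matrix (Fin n) (Fin n) ℂ) :
    trCLM n X H = Matrix.trace (X * H) := rfl

/-- det as a continuous multilinear map in the rows. -/
noncomputable def detCML (n : ℕ) :
    ContinuousMultilinearMap ℂ (fun _ : Fin n => (Fin n → ℂ)) ℂ :=
  MultilinearMap.mkContinuous (Matrix.detRowAlternating :
      (Fin n → ℂ) [⋀^Fin n]→ₗ[ℂ] ℂ).toMultilinearMap
    (Nat.factorial n) (by
      intro m
      have : Matrix.detRowAlternating (R := ℂ) (n := Fin n) m = (Matrix.of m).det := rfl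
      rw [AlternatingMap.coe_multilinearMap, this, Matrix.det_apply]
      refine (norm_sum_le _ _).trans ?_
      have hcard : (Finset.univ : Finset (Equiv.Perm (Fin n))).card = Nat.factorial n := by
        simp [Fintype.card_perm]
      calc ∑ σ : Equiv.Perm (Fin n), ‖Equiv.Perm.sign σ • ∏ i, Matrix.of m (σ i) i‖
          ≤ ∑ _σ : Equiv.Perm (Fin n), ∏ i, ‖m i‖ := by
            refine Finset.sum_le_sum fun σ _ => ?_
            have hs : ‖Equiv.Perm.sign σ • ∏ i, Matrix.of m (σ i) i‖
                = ‖∏ i, Matrix.of m (σ i) i‖ := by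
              rcases Int.units_eq_one_or (Equiv.Perm.sign σ) with h | h <;> simp [h]
            rw [hs]
            calc ‖∏ i, Matrix.of m (σ i) i‖ = ∏ i, ‖m (σ i) i‖ := by
                  rw [norm_prod]; rfl
              _ ≤ ∏ i, ‖m (σ i)‖ :=
                  Finset.prod_le_prod (fun i _ => norm_nonneg _)
                    (fun i _ => norm_le_pi_norm (m (σ i)) i)
              _ = ∏ i, ‖m i‖ := Equiv.prod_comp σ (fun i => ‖m i‖)
        _ = Nat.factorial n * ∏ i, ‖m i‖ := by
            rw [Finset.sum_const, hcard, nsmul_eq_mul])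

lemma detCML_apply (M : Matrix (Fin n) (Fin n) ℂ) : detCML n M = M.det := rfl

/-- Jacobi's formula: the derivative of `det` at `A` is `H ↦ trace (adjugate A * H)`. -/
theorem hasFDerivAt_det (A : Matrix (Fin n) (Fin n) ℂ) :
    HasFDerivAt (fun M : Matrix (Fin n) (Fin n) ℂ => M.det) (trCLM n (adjugate A)) A := by
  have hD : trCLM n (adjugate A) = (detCML n).linearDeriv A := by
    ext H
    erw [ContinuousMultilinearMap.linearDeriv_apply]
    have hterm : ∀ i : Fin n, (detCML n) (Function.update A i (H i))
        = ∑ j, H i j * adjugate A j i := by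
      intro i
      have hdef : (detCML n) (Function.update A i (H i))
          = ((Matrix.detRowAlternating :
              (Fin n → ℂ) [⋀^Fin n]→ₗ[ℂ] ℂ).toMultilinearMap.toLinearMap A i) (H i) := by
        simp [detCML, MultilinearMap.toLinearMap]
      rw [hdef]
      have hv : H i = ∑ j, H i j • (Pi.single j 1 : Fin n → ℂ) := by
        funext k
        simp [Pi.single_apply]
      conv_lhs => rw [hv]
      rw [map_sum]
      refine Finset.sum_congr rfl fun j _ => ?_
      rw [_root_.map_smul]
      have : ((Matrix.detRowAlternating :
          (Fin n → ℂ) [⋀^Fin n]→ₗ[ℂ] ℂ).toMultilinearMap.toLinearMap A i) (Pi.single j 1)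
          = (A.updateRow i (Pi.single j 1)).det := by
        simp [MultilinearMap.toLinearMap, Matrix.updateRow]
        rfl
      rw [this, ← Matrix.adjugate_apply]
      simp [smul_eq_mul]
    rw [Finset.sum_congr rfl fun i _ => hterm i]
    rw [trCLM_apply, Matrix.trace]
    rw [Finset.sum_comm]
    refine Finset.sum_congr rfl fun j _ => ?_
    simp [Matrix.mul_apply, Matrix.diag, mul_comm]
  exact hD ▸ (detCML n).hasFDerivAt A

noncomputable def lagC (n t r : ℕ) : ℂ :=
  (Lagrange.basis (Finset.range (n + 1)) (fun k : ℕ => (k : ℂ)) t).coeff r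

lemma natCast_injOn_range : Set.InjOn (fun k : ℕ => (k : ℂ)) (Finset.range (n + 1)) :=
  fun a _ b _ h => Nat.cast_injective h

lemma coeff_eq_sum_eval {p : ℂ[X]} (hp : p.natDegree ≤ n) (r : ℕ) :
    p.coeff r = ∑ t ∈ Finset.range (n + 1), p.eval (t : ℂ) * lagC n t r := by
  have hdeg : p.degree < (Finset.range (n + 1)).card := by
    rw [Finset.card_range]
    exact lt_of_le_of_lt degree_le_natDegree (by exact_mod_cast Nat.lt_succ_of_le hp)
  conv_lhs => rw [Lagrange.eq_interpolate natCast_injOn_range hdeg]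
  rw [Lagrange.interpolate_apply, finset_sum_coeff]
  exact Finset.sum_congr rfl fun t _ => by rw [coeff_C_mul]; rfl

lemma eval_charpoly' (M : Matrix (Fin n) (Fin n) ℂ) (x : ℂ) :
    (Matrix.charpoly M).eval x = (x • (1 : Matrix (Fin n) (Fin n) ℂ) - M).det := by
  rw [Matrix.charpoly, eval_det, Matrix.matPolyEquiv_charmatrix]
  congr 1
  rw [eval_sub, eval_X, eval_C]
  congr 1
  ext i j
  simp [Matrix.scalar_apply, Matrix.one_apply, Matrix.diagonal_apply]

lemma hasFDerivAt_detAffine (x : ℂ) (B : Matrix (Fin n) (Fin n) ℂ) :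
    HasFDerivAt (fun M : Matrix (Fin n) (Fin n) ℂ => (x • 1 - M).det)
      (-(trCLM n (adjugate (x • (1 : Matrix (Fin n) (Fin n) ℂ) - B)))) B := by
  have hg : HasFDerivAt (fun M : Matrix (Fin n) (Fin n) ℂ => x • 1 - M)
      (-(ContinuousLinearMap.id ℂ (Matrix (Fin n) (Fin n) ℂ))) B := by
    exact (hasFDerivAt_id B).const_sub (x • (1 : Matrix (Fin n) (Fin n) ℂ))
  have h := (hasFDerivAt_det (x • 1 - B)).comp B hg
  have key : -(trCLM n (adjugate (x • (1 : Matrix (Fin n) (Fin n) ℂ) - B)))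
      = (trCLM n (adjugate (x • (1 : Matrix (Fin n) (Fin n) ℂ) - B))).comp
        (-(ContinuousLinearMap.id ℂ (Matrix (Fin n) (Fin n) ℂ))) := by
    ext H
    simp
  exact h.congr_fderiv key.symm

/-- The matrices appearing as derivative functionals of `matSigma`. -/
noncomputable def NN (n : ℕ) (B : Matrix (Fin n) (Fin n) ℂ) (j : ℕ) :
    Matrix (Fin n) (Fin n) ℂ :=
  (-1 : ℂ) ^ (j + 1) •
    ∑ t ∈ Finset.range (n + 1), lagC n t (n - j) • adjugate ((t : ℂ) • 1 - B)

theorem hasFDerivAt_matSigma (j : ℕ) (B : Matrix (Fin n) (Fin n) ℂ) :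
    HasFDerivAt (matSigma n j) (trCLM n (NN n B j)) B := by
  have hfun : matSigma n j = fun M : Matrix (Fin n) (Fin n) ℂ =>
      ∑ t ∈ Finset.range (n + 1),
        ((-1 : ℂ) ^ j * lagC n t (n - j)) * ((t : ℂ) • 1 - M).det := by
    funext M
    have hdeg : (Matrix.charpoly M).natDegree ≤ n := by
      rw [Matrix.charpoly_natDegree_eq_dim]
      simp
    rw [matSigma, coeff_eq_sum_eval hdeg, Finset.mul_sum]
    exact Finset.sum_congr rfl fun t _ => by rw [eval_charpoly']; ring
  rw [hfun]
  have h := HasFDerivAt.sum (u := Finset.range (n + 1))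
    (fun t _ => ((hasFDerivAt_detAffine (t : ℂ) B).const_mul
      ((-1 : ℂ) ^ j * lagC n t (n - j))))
  rw [Finset.sum_fn] at h
  have key : trCLM n (NN n B j) = ∑ t ∈ Finset.range (n + 1),
      ((-1 : ℂ) ^ j * lagC n t (n - j)) • -(trCLM n (adjugate ((t : ℂ) • 1 - B))) := by
    ext H
    simp only [ContinuousLinearMap.coe_sum', Finset.sum_apply, ContinuousLinearMap.coe_smul',
      Pi.smul_apply, ContinuousLinearMap.neg_apply, trCLM_apply, NN]
    rw [Matrix.smul_mul, Matrix.sum_mul, Matrix.trace_smul, Matrix.trace_sum, Finset.smul_sum]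
    refine Finset.sum_congr rfl fun t _ => ?_
    rw [Matrix.smul_mul, Matrix.trace_smul]
    simp only [smul_eq_mul, pow_succ]
    ring
  exact h.congr_fderiv key.symm

theorem hasFDerivAt_symmPi (B : Matrix (Fin n) (Fin n) ℂ) :
    HasFDerivAt (symmPi n)
      (ContinuousLinearMap.pi fun j : Fin n => trCLM n (NN n B ((j : ℕ) + 1))) B := by
  apply hasFDerivAt_pi''
  intro j
  exact hasFDerivAt_matSigma ((j : ℕ) + 1) B

theorem fderiv_symmPi (B : Matrix (Fin n) (Fin n) ℂ) :
    fderiv ℂ (symmPi n) B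
      = ContinuousLinearMap.pi fun j : Fin n => trCLM n (NN n B ((j : ℕ) + 1)) :=
  (hasFDerivAt_symmPi B).fderiv

/-- The adjugate of the characteristic matrix, as a polynomial with matrix coefficients. -/
noncomputable def adjP (B : Matrix (Fin n) (Fin n) ℂ) : (Matrix (Fin n) (Fin n) ℂ)[X] :=
  matPolyEquiv (adjugate (charmatrix B))

lemma adjP_mul (B : Matrix (Fin n) (Fin n) ℂ) :
    (X - C B) * adjP B
      = (Matrix.charpoly B).map (algebraMap ℂ (Matrix (Fin n) (Fin n) ℂ)) := by
  have h : charmatrix B * adjugate (charmatrix B)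
      = Matrix.charpoly B • (1 : Matrix (Fin n) (Fin n) ℂ[X]) := Matrix.mul_adjugate _
  apply_fun matPolyEquiv at h
  rwa [_root_.map_mul, Matrix.matPolyEquiv_charmatrix, matPolyEquiv_smul_one] at h

lemma adjP_coeff_eq_zero (hn : 0 < n) (B : Matrix (Fin n) (Fin n) ℂ) {r : ℕ} (hr : n ≤ r) :
    (adjP B).coeff r = 0 := by
  haveI : Nonempty (Fin n) := ⟨⟨0, hn⟩⟩
  have hinj : Function.Injective (algebraMap ℂ (Matrix (Fin n) (Fin n) ℂ)) := fun x y hxy => by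
    simpa [Matrix.algebraMap_matrix_apply] using congr_fun (congr_fun hxy ⟨0, hn⟩) ⟨0, hn⟩
  have hdegmap : ((Matrix.charpoly B).map (algebraMap ℂ (Matrix (Fin n) (Fin n) ℂ))).degree
      = (n : WithBot ℕ) := by
    rw [Polynomial.degree_map_eq_of_injective hinj, Matrix.charpoly_degree_eq_dim]
    simp
  have hane : adjP B ≠ 0 := by
    intro h0
    have h := adjP_mul B
    rw [h0, mul_zero] at h
    rw [← h, Polynomial.degree_zero] at hdegmap
    exact absurd hdegmap (by simp)
  have hlead : (X - C B).leadingCoeff * (adjP B).leadingCoeff ≠ 0 := by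
    rw [(monic_X_sub_C B).leadingCoeff, one_mul]
    exact Polynomial.leadingCoeff_ne_zero.mpr hane
  have hdeg : (1 : WithBot ℕ) + (adjP B).degree = (n : WithBot ℕ) := by
    have h := Polynomial.degree_mul' hlead
    rw [adjP_mul B, hdegmap, Polynomial.degree_X_sub_C] at h
    exact h.symm
  rw [Polynomial.degree_eq_natDegree hane] at hdeg
  have hnat : 1 + (adjP B).natDegree = n := by exact_mod_cast hdeg
  exact Polynomial.coeff_eq_zero_of_natDegree_lt (by omega)

/-- The span of the coefficient matrices of `adjP B`. -/
noncomputable def coeffSpan (n : ℕ) (B : Matrix (Fin n) (Fin n) ℂ) :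
    Submodule ℂ (Matrix (Fin n) (Fin n) ℂ) :=
  Submodule.span ℂ (Set.range fun r : ℕ => (adjP B).coeff r)

lemma charpoly_coeff_n (hn : 0 < n) (B : Matrix (Fin n) (Fin n) ℂ) :
    (Matrix.charpoly B).coeff n = 1 := by
  have hdeg : (Matrix.charpoly B).natDegree = n := by
    rw [Matrix.charpoly_natDegree_eq_dim]; simp
  have h := (Matrix.charpoly_monic B).coeff_natDegree
  rwa [hdeg] at h

lemma coeff_relation_succ (B : Matrix (Fin n) (Fin n) ℂ) (m : ℕ) :
    (adjP B).coeff m - B * (adjP B).coeff (m + 1)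
      = (Matrix.charpoly B).coeff (m + 1) • (1 : Matrix (Fin n) (Fin n) ℂ) := by
  have h := congr_arg (fun p => p.coeff (m + 1)) (adjP_mul B)
  simp only [_root_.sub_mul, Polynomial.coeff_sub, Polynomial.coeff_map,
    Polynomial.coeff_C_mul, Polynomial.coeff_X_mul] at h
  rw [Algebra.algebraMap_eq_smul_one] at h
  exact h

lemma coeff_relation_zero (B : Matrix (Fin n) (Fin n) ℂ) :
    B * (adjP B).coeff 0
      = (-(Matrix.charpoly B).coeff 0) • (1 : Matrix (Fin n) (Fin n) ℂ) := by
  have h := congr_arg (fun p => p.coeff 0) (adjP_mul B)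
  simp only [_root_.sub_mul, Polynomial.coeff_sub, Polynomial.coeff_map,
    Polynomial.coeff_C_mul, Polynomial.coeff_X_mul_zero] at h
  rw [Algebra.algebraMap_eq_smul_one] at h
  rw [neg_smul, ← h]
  simp

lemma one_mem_coeffSpan (hn : 0 < n) (B : Matrix (Fin n) (Fin n) ℂ) :
    (1 : Matrix (Fin n) (Fin n) ℂ) ∈ coeffSpan n B := by
  obtain ⟨m, hm⟩ : ∃ m, n = m + 1 := ⟨n - 1, by omega⟩
  have h := coeff_relation_succ B m
  have hz : (adjP B).coeff (m + 1) = 0 := adjP_coeff_eq_zero hn B (by omega)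
  have hc : (Matrix.charpoly B).coeff (m + 1) = 1 := by rw [← hm]; exact charpoly_coeff_n hn B
  rw [hz, mul_zero, sub_zero, hc, one_smul] at h
  rw [← h]
  exact Submodule.subset_span ⟨m, rfl⟩

lemma mul_mem_coeffSpan (hn : 0 < n) (B : Matrix (Fin n) (Fin n) ℂ) {x : Matrix (Fin n) (Fin n) ℂ}
    (hx : x ∈ coeffSpan n B) : B * x ∈ coeffSpan n B := by
  induction hx using Submodule.span_induction with
  | mem x hx =>
    obtain ⟨r, rfl⟩ := hx
    cases r with
    | zero =>
      rw [coeff_relation_zero B]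
      exact Submodule.smul_mem _ _ (one_mem_coeffSpan hn B)
    | succ m =>
      have h := coeff_relation_succ B m
      have hBx : B * (adjP B).coeff (m + 1)
          = (adjP B).coeff m - (Matrix.charpoly B).coeff (m + 1) • 1 := by
        rw [← h]; abel
      rw [hBx]
      exact Submodule.sub_mem _ (Submodule.subset_span ⟨m, rfl⟩)
        (Submodule.smul_mem _ _ (one_mem_coeffSpan hn B))
  | zero => simpa using Submodule.zero_mem _
  | add x y _ _ hx hy => rw [Matrix.mul_add]; exact Submodule.add_mem _ hx hy
  | smul c x _ hx => rw [Matrix.mul_smul]; exact Submodule.smul_mem _ _ hx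

lemma pow_mem_coeffSpan (hn : 0 < n) (B : Matrix (Fin n) (Fin n) ℂ) (t : ℕ) :
    B ^ t ∈ coeffSpan n B := by
  induction t with
  | zero => simpa using one_mem_coeffSpan hn B
  | succ t ih => rw [pow_succ']; exact mul_mem_coeffSpan hn B ih

lemma charmatrix_map_eval (B : Matrix (Fin n) (Fin n) ℂ) (x : ℂ) :
    (charmatrix B).map (Polynomial.evalRingHom x)
      = x • (1 : Matrix (Fin n) (Fin n) ℂ) - B := by
  ext i k
  by_cases h : i = k <;>
    simp [h, charmatrix_apply, Matrix.diagonal_apply, Matrix.one_apply]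

lemma adjugate_entry_eval (B : Matrix (Fin n) (Fin n) ℂ) (x : ℂ) (i k : Fin n) :
    adjugate (x • (1 : Matrix (Fin n) (Fin n) ℂ) - B) i k
      = (adjugate (charmatrix B) i k).eval x := by
  have h := (Polynomial.evalRingHom x).map_adjugate (charmatrix B)
  simp only [RingHom.mapMatrix_apply] at h
  rw [charmatrix_map_eval] at h
  rw [← h, Matrix.map_apply]
  rfl

lemma adjP_coeff_entry (B : Matrix (Fin n) (Fin n) ℂ) (r : ℕ) (i k : Fin n) :
    (adjP B).coeff r i k = (adjugate (charmatrix B) i k).coeff r :=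
  matPolyEquiv_coeff_apply _ _ _ _

lemma sum_lagC_adjugate (hn : 0 < n) (B : Matrix (Fin n) (Fin n) ℂ) (r : ℕ) :
    ∑ t ∈ Finset.range (n + 1), lagC n t r • adjugate ((t : ℂ) • 1 - B)
      = (adjP B).coeff r := by
  ext i k
  have hq : (adjugate (charmatrix B) i k).natDegree ≤ n := by
    rw [Polynomial.natDegree_le_iff_coeff_eq_zero]
    intro N hN
    rw [← adjP_coeff_entry B N i k, adjP_coeff_eq_zero hn B (le_of_lt hN)]
    rfl
  rw [adjP_coeff_entry B r i k, coeff_eq_sum_eval hq r]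
  rw [Matrix.sum_apply]
  refine Finset.sum_congr rfl fun t _ => ?_
  rw [Matrix.smul_apply, adjugate_entry_eval B (t : ℂ) i k, smul_eq_mul, mul_comm]

lemma NN_eq_coeff (hn : 0 < n) (B : Matrix (Fin n) (Fin n) ℂ) (j : ℕ) :
    NN n B j = (-1 : ℂ) ^ (j + 1) • (adjP B).coeff (n - j) := by
  rw [NN, sum_lagC_adjugate hn B]

lemma coeffSpan_le_spanNN (hn : 0 < n) (B : Matrix (Fin n) (Fin n) ℂ) :
    coeffSpan n B
      ≤ Submodule.span ℂ (Set.range fun j : Fin n => NN n B ((j : ℕ) + 1)) := by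
  rw [coeffSpan, Submodule.span_le]
  rintro _ ⟨r, rfl⟩
  dsimp only
  by_cases hr : n ≤ r
  · rw [adjP_coeff_eq_zero hn B hr]
    exact Submodule.zero_mem _
  · push_neg at hr
    set j : Fin n := ⟨n - r - 1, by omega⟩
    have hj : (j : ℕ) + 1 = n - r := by simp only [j]; omega
    have hc : (adjP B).coeff r = (-1 : ℂ) ^ ((j : ℕ) + 1 + 1) • NN n B ((j : ℕ) + 1) := by
      rw [NN_eq_coeff hn B, hj]
      have : n - (n - r) = r := by omega
      rw [this, smul_smul, ← pow_add]
      have : ((-1 : ℂ)) ^ (n - r + 1 + (n - r + 1)) = 1 := by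
        rw [← two_mul, pow_mul]
        norm_num
      rw [this, one_smul]
    rw [hc]
    exact Submodule.smul_mem _ _ (Submodule.subset_span ⟨j, rfl⟩)

/-- The trace pairing, as a linear map into the dual. -/
noncomputable def tauLin (n : ℕ) :
    Matrix (Fin n) (Fin n) ℂ →ₗ[ℂ] (Matrix (Fin n) (Fin n) ℂ →ₗ[ℂ] ℂ) where
  toFun X := trLin n X
  map_add' X Y := by ext H; simp [trLin, Matrix.add_mul]
  map_smul' c X := by ext H; simp [trLin, Matrix.smul_mul]

lemma trace_mul_stdBasis (X : Matrix (Fin n) (Fin n) ℂ) (i j : Fin n) :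
    Matrix.trace (X * Matrix.single j i 1) = X i j := by
  simp only [Matrix.trace, Matrix.diag, Matrix.mul_apply, Matrix.single, Matrix.of_apply,
    mul_ite, mul_one, mul_zero]
  rw [Finset.sum_comm]
  simp [ite_and]

lemma tauLin_injective : Function.Injective (tauLin n) := by
  intro X Y hXY
  ext i j
  have h := congr_arg (fun f => f (Matrix.single j i 1)) hXY
  simpa [tauLin, trLin, trace_mul_stdBasis] using h

/-- For every matrix B ∈ ℂ^{n×n}, the rank of the derivative π'(B) : ℂ^{n×n} → ℂ^n of the
symmetrization map at B is at least the degree of the minimal polynomial of B. -/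
theorem natDegree_minpoly_le_rank_fderiv_symmPi
    (n : ℕ) (hn : 0 < n) (B : Matrix (Fin n) (Fin n) ℂ) :
    (minpoly ℂ B).natDegree
      ≤ Module.finrank ℂ (LinearMap.range (fderiv ℂ (symmPi n) B).toLinearMap) := by
  rw [fderiv_symmPi B]
  set SN : Submodule ℂ (Matrix (Fin n) (Fin n) ℂ) :=
    Submodule.span ℂ (Set.range fun j : Fin n => NN n B ((j : ℕ) + 1)) with hSN
  set Λ : Matrix (Fin n) (Fin n) ℂ →ₗ[ℂ] (Fin n → ℂ) :=
    (ContinuousLinearMap.pi fun j : Fin n => trCLM n (NN n B ((j : ℕ) + 1))).toLinearMap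
    with hΛ
  have hrange : LinearMap.range Λ.dualMap = SN.map (tauLin n) := by
    apply le_antisymm
    · rintro _ ⟨φ, rfl⟩
      refine ⟨∑ j, φ (Pi.single j 1) • NN n B ((j : ℕ) + 1), ?_, ?_⟩
      · exact Submodule.sum_mem _ fun j _ =>
          Submodule.smul_mem _ _ (Submodule.subset_span ⟨j, rfl⟩)
      · ext H
        have hdecomp : Λ H = ∑ j, (Λ H) j • (Pi.single j 1 : Fin n → ℂ) := by
          funext k; simp [Pi.single_apply]

        have hφ : Λ.dualMap φ H = ∑ j, (Λ H) j * φ (Pi.single j 1) := by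
          rw [LinearMap.dualMap_apply]
          conv_lhs => rw [hdecomp]
          rw [map_sum]
          exact Finset.sum_congr rfl fun j _ => by rw [_root_.map_smul, smul_eq_mul]
        rw [hφ]
        simp only [tauLin, LinearMap.coe_mk, AddHom.coe_mk, trLin, Matrix.sum_mul,
          Matrix.smul_mul, Matrix.trace_sum, Matrix.trace_smul]
        refine Finset.sum_congr rfl fun j _ => ?_
        have : (Λ H) j = Matrix.trace (NN n B ((j : ℕ) + 1) * H) := rfl
        rw [this, smul_eq_mul]
        ring
    · rw [Submodule.map_span, Submodule.span_le]
      rintro _ ⟨_, ⟨j, rfl⟩, rfl⟩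
      refine ⟨LinearMap.proj j, ?_⟩
      ext H
      rfl
  have hfr1 : Module.finrank ℂ (LinearMap.range Λ)
      = Module.finrank ℂ (LinearMap.range Λ.dualMap) :=
    (LinearMap.finrank_range_dualMap_eq_finrank_range Λ).symm
  have hfr2 : Module.finrank ℂ (SN.map (tauLin n)) = Module.finrank ℂ SN :=
    (Submodule.equivMapOfInjective (tauLin n) tauLin_injective SN).finrank_eq.symm
  have hpow : Submodule.span ℂ
      (Set.range fun i : Fin (minpoly ℂ B).natDegree => B ^ (i : ℕ)) ≤ SN := by
    rw [Submodule.span_le]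
    rintro _ ⟨i, rfl⟩
    exact coeffSpan_le_spanNN hn B (pow_mem_coeffSpan hn B _)
  have hd : (minpoly ℂ B).natDegree
      = Module.finrank ℂ (Submodule.span ℂ
        (Set.range fun i : Fin (minpoly ℂ B).natDegree => B ^ (i : ℕ))) := by
    rw [finrank_span_eq_card (linearIndependent_pow B)]
    simp
  rw [hd]
  calc Module.finrank ℂ (Submodule.span ℂ
        (Set.range fun i : Fin (minpoly ℂ B).natDegree => B ^ (i : ℕ)))
      ≤ Module.finrank ℂ SN := Submodule.finrank_mono hpow
    _ = Module.finrank ℂ (SN.map (tauLin n)) := hfr2.symm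
    _ = Module.finrank ℂ (LinearMap.range Λ.dualMap) := by rw [hrange]
    _ = Module.finrank ℂ (LinearMap.range Λ) := hfr1.symm
end
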